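/- For x, y ∈ ℝ^n, the equality xᵀN x = yᵀN y holds for all positive semidefinite matrices N ∈ S₊^n if, and only if, x = α y for some α ∈ {−1, +1}, or x = y = 0. -/

import Mathlib

/-!
Testing with `N = 1` gives `x ⬝ᵥ x = y ⬝ᵥ y`, and testing with the rank-one matrix `N = x xᵀ`
gives `(x ⬝ᵥ y)² = (x ⬝ᵥ x)²`, so `x ⬝ᵥ y = ±(x ⬝ᵥ x)`; then `(x ∓ y) ⬝ᵥ (x ∓ y) = 0`, i.e. `x = ±y`.
Conversely the quadratic form `x ⬝ᵥ (N *ᵥ x)` is even in `x`.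
-/

open Matrix

variable {ι R : Type*} [Fintype ι]

theorem dotProduct_vecMulVec_self_mulVec [CommSemiring R] (v u : ι → R) :
    u ⬝ᵥ (vecMulVec v v *ᵥ u) = (v ⬝ᵥ u) ^ 2 := by
  rw [vecMulVec_mulVec, op_smul_eq_smul, dotProduct_smul, smul_eq_mul, dotProduct_comm, sq]

theorem eq_or_eq_neg_of_dotProduct_self_eq [CommRing R] [LinearOrder R] [IsStrictOrderedRing R]
    {x y : ι → R} (hnorm : x ⬝ᵥ x = y ⬝ᵥ y) (hproj : (x ⬝ᵥ y) ^ 2 = (x ⬝ᵥ x) ^ 2) :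
    x = y ∨ x = -y := by
  have hyx : y ⬝ᵥ x = x ⬝ᵥ y := dotProduct_comm y x
  rcases sq_eq_sq_iff_eq_or_eq_neg.mp hproj with hxy | hxy
  · left
    have hsub : (x - y) ⬝ᵥ (x - y) = 0 := by
      simp only [sub_dotProduct, dotProduct_sub]
      linear_combination -hnorm - 2 * hxy - hyx
    exact sub_eq_zero.mp (dotProduct_self_eq_zero.mp hsub)
  · right
    have hadd : (x + y) ⬝ᵥ (x + y) = 0 := by
      simp only [add_dotProduct, dotProduct_add]
      linear_combination -hnorm + 2 * hxy + hyx
    exact eq_neg_of_add_eq_zero_left (dotProduct_self_eq_zero.mp hadd)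

/-- `xᵀNx = yᵀNy` holds for all positive semidefinite matrices `N` iff
`x = α • y` for some `α ∈ {-1, +1}`, or `x = y = 0`. -/
theorem quadForm_eq_iff_pm (n : ℕ) (x y : Fin n → ℝ) :
    (∀ N : Matrix (Fin n) (Fin n) ℝ, N.PosSemidef →
      x ⬝ᵥ (N *ᵥ x) = y ⬝ᵥ (N *ᵥ y)) ↔
    ((∃ α : ℝ, (α = -1 ∨ α = 1) ∧ x = α • y) ∨ (x = 0 ∧ y = 0)) := by
  constructor
  · intro h
    have hnorm : x ⬝ᵥ x = y ⬝ᵥ y := by simpa using h 1 PosSemidef.one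
    have hproj := h (vecMulVec x x) (by simpa using posSemidef_vecMulVec_self_star x)
    rw [dotProduct_vecMulVec_self_mulVec, dotProduct_vecMulVec_self_mulVec] at hproj
    rcases eq_or_eq_neg_of_dotProduct_self_eq hnorm hproj.symm with rfl | rfl
    · exact Or.inl ⟨1, Or.inr rfl, (one_smul ℝ x).symm⟩
    · exact Or.inl ⟨-1, Or.inl rfl, (neg_one_smul ℝ y).symm⟩
  · rintro (⟨α, rfl | rfl, rfl⟩ | ⟨rfl, rfl⟩) N - <;> simp [mulVec_neg]
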